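/- arXiv:2605.10479 — 5 statements merged into one kernel-verified Lean document; each statement's English description precedes it below -/
import Mathlib

section
/- Let n ≥ 1, let φ be a function from the finite subsets of ℝ^n to [0, ∞) such that φ(Y) = 0 whenever the vectors in Y are linearly dependent, let B ⊆ ℝ^n be a finite set, let k ≥ 0 be an integer, and let R₁ ≥ 0 be an odd integer. Then Σ_{r=0}^{R₁} (−1)^r Σ_{X ∈ 𝒮_{k,r}(B)} Σ_{Y ⊆ X, |Y| = k} φ(Y) ≤ φ(B)·1_{{|B| = k}}. -/
/-!
Expanding the inner sums, the left-hand side is `∑_{Y ⊆ B, |Y| = k} c(Y) φ(Y)` with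
`c(Y) = ∑_{r ≤ R₁} (-1)^r #{X ∈ 𝒮_{k,r}(B) | Y ⊆ X}`. For `Y ≠ B` fix `b ∈ B \ Y`: toggling `b`
sends the supersets of `Y` on even levels injectively to supersets on odd levels. Even levels
consist of independent sets, so removing `b` keeps them in `𝒮` and adding `b` creates deficiency
at most one; since `R₁` is odd, an even level `r ≤ R₁` always has the level `r + 1 ≤ R₁` above it.
Hence `c(Y) ≤ 0`, and as `φ ≥ 0` only `Y = B` can contribute, with `c(B) ≤ 1`.
-/

noncomputable section

/-- A finite set `Y` of vectors of `ℝⁿ` consists of linearly independent vectors. -/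
def indepFinset {n : ℕ} (Y : Finset (Fin n → ℝ)) : Prop :=
  LinearIndependent ℝ (fun x : (Y : Set (Fin n → ℝ)) => (x : Fin n → ℝ))

/-- `rank X`: the dimension of the linear span of a finite set `X` of vectors of `ℝⁿ`. -/
def rankOf {n : ℕ} (X : Finset (Fin n → ℝ)) : ℕ :=
  Module.finrank ℝ ↥(Submodule.span ℝ (X : Set (Fin n → ℝ)))

/-- The rank deficiency `δ(X) = |X| - rank X` of a finite set `X` of vectors of `ℝⁿ`. -/
def rankDef {n : ℕ} (X : Finset (Fin n → ℝ)) : ℕ :=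
  X.card - rankOf X

/-- `𝒮_{k,r}(B)`: the subsets `X ⊆ B` with `|X| = k + r` and `δ(X) ≤ 1` if `r` is odd,
`δ(X) = 0` if `r` is even. -/
def schmidtS {n : ℕ} (k r : ℕ) (B : Finset (Fin n → ℝ)) : Finset (Finset (Fin n → ℝ)) :=
  (B.powersetCard (k + r)).filter fun X => rankDef X ≤ if Odd r then 1 else 0

open Finset

theorem Finset.sum_sum_powersetCard_eq_sum_card_smul {α β : Type*} [DecidableEq α]
    [AddCommMonoid β] {B : Finset α} {S : Finset (Finset α)} (hS : ∀ X ∈ S, X ⊆ B) (k : ℕ)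
    (f : Finset α → β) :
    ∑ X ∈ S, ∑ Y ∈ X.powersetCard k, f Y = ∑ Y ∈ B.powersetCard k, #{X ∈ S | Y ⊆ X} • f Y := by
  simp_rw [← sum_const, sum_filter]
  rw [sum_comm' (t' := B.powersetCard k) (s' := fun Y => {X ∈ S | Y ⊆ X})]
  · simp_rw [sum_filter]
  · intro X Y
    simp only [mem_powersetCard, mem_filter]
    constructor
    · rintro ⟨hX, hYX, hY⟩; exact ⟨⟨hX, hYX⟩, hYX.trans (hS X hX), hY⟩
    · rintro ⟨⟨hX, hYX⟩, -, hY⟩; exact ⟨hX, hYX, hY⟩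

theorem alternating_sum_card_nonpos_of_injective {β 𝕜 : Type*} [DecidableEq β]
    [CommRing 𝕜] [LinearOrder 𝕜] [IsStrictOrderedRing 𝕜] {I : Finset ℕ} {T : ℕ → Finset β}
    (hT : (I : Set ℕ).PairwiseDisjoint T) {f : β → β} (hf : f.Injective)
    (hmaps : ∀ r ∈ I, Even r → ∀ x ∈ T r, ∃ r' ∈ I, Odd r' ∧ f x ∈ T r') :
    ∑ r ∈ I, (-1 : 𝕜) ^ r * #(T r) ≤ 0 := by
  set E := {r ∈ I | Even r}
  set O := {r ∈ I | ¬Even r}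
  have hEO : #(E.biUnion T) ≤ #(O.biUnion T) := by
    refine card_le_card_of_injOn f (fun x hx => ?_) hf.injOn
    obtain ⟨r, hr, hx⟩ := mem_biUnion.1 hx
    obtain ⟨hrI, hre⟩ := mem_filter.1 hr
    obtain ⟨r', hr'I, hr'o, hfx⟩ := hmaps r hrI hre x hx
    exact mem_biUnion.2 ⟨r', mem_filter.2 ⟨hr'I, Nat.not_even_iff_odd.2 hr'o⟩, hfx⟩
  have hE : ∑ r ∈ E, #(T r) = #(E.biUnion T) :=
    (card_biUnion (hT.subset (coe_subset.2 (filter_subset _ I)))).symm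
  have hO : #(O.biUnion T) ≤ ∑ r ∈ O, #(T r) := card_biUnion_le
  calc ∑ r ∈ I, (-1 : 𝕜) ^ r * #(T r)
      = ∑ r ∈ E, ((#(T r) : ℕ) : 𝕜) - ∑ r ∈ O, ((#(T r) : ℕ) : 𝕜) := by
        rw [← sum_filter_add_sum_filter_not I Even, sub_eq_add_neg, ← sum_neg_distrib]
        congr 1 <;> refine sum_congr rfl fun r hr => ?_
        · rw [(mem_filter.1 hr).2.neg_one_pow, one_mul]
        · rw [(Nat.not_even_iff_odd.1 (mem_filter.1 hr).2).neg_one_pow, neg_one_mul]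
    _ ≤ 0 := by
        rw [sub_nonpos]
        exact_mod_cast hE.trans_le (hEO.trans hO)

lemma rankOf_le_card {n : ℕ} (X : Finset (Fin n → ℝ)) : rankOf X ≤ #X :=
  finrank_span_finset_le_card X

lemma rankDef_eq_zero_iff {n : ℕ} {X : Finset (Fin n → ℝ)} : rankDef X = 0 ↔ indepFinset X := by
  rw [indepFinset, linearIndependent_iff_card_eq_finrank_span, Subtype.range_coe_subtype,
    Set.ofPred_mem_eq, Set.finrank, ← rankOf, rankDef, Nat.sub_eq_zero_iff_le]
  simp only [coe_sort_coe, Fintype.card_coe]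
  exact ⟨fun h => (rankOf_le_card X).antisymm h |>.symm, fun h => h.le⟩

lemma indepFinset.mono {n : ℕ} {X X' : Finset (Fin n → ℝ)} (h : X ⊆ X')
    (h' : indepFinset X') : indepFinset X :=
  LinearIndepOn.mono (R := ℝ) (v := id) h' (coe_subset.2 h)

lemma rankDef_insert_le_one {n : ℕ} {X : Finset (Fin n → ℝ)} (hX : indepFinset X)
    (b : Fin n → ℝ) : rankDef (insert b X) ≤ 1 := by
  have hdef : #X - rankOf X = 0 := rankDef_eq_zero_iff.2 hX
  have hmono : rankOf X ≤ rankOf (insert b X) :=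
    Submodule.finrank_mono (Submodule.span_mono (coe_subset.2 (subset_insert b X)))
  have := card_insert_le b X
  unfold rankDef
  omega

section schmidtS

variable {n k r : ℕ} {B X : Finset (Fin n → ℝ)} {b : Fin n → ℝ}

lemma mem_schmidtS :
    X ∈ schmidtS k r B ↔ X ⊆ B ∧ #X = k + r ∧ rankDef X ≤ if Odd r then 1 else 0 := by
  rw [schmidtS, mem_filter, mem_powersetCard, and_assoc]

lemma indepFinset_of_mem_schmidtS (hX : X ∈ schmidtS k r B) (hr : Even r) : indepFinset X := by
  have := (mem_schmidtS.1 hX).2.2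
  rw [if_neg (Nat.not_odd_iff_even.2 hr), Nat.le_zero, rankDef_eq_zero_iff] at this
  exact this

lemma erase_mem_schmidtS (hX : X ∈ schmidtS k (r + 1) B) (hr : Even (r + 1)) (hb : b ∈ X) :
    X.erase b ∈ schmidtS k r B := by
  obtain ⟨hXB, hXcard, -⟩ := mem_schmidtS.1 hX
  have hind := (indepFinset_of_mem_schmidtS hX hr).mono (erase_subset b X)
  refine mem_schmidtS.2 ⟨(erase_subset b X).trans hXB, ?_, ?_⟩
  · rw [card_erase_of_mem hb, hXcard]; rfl
  · rw [rankDef_eq_zero_iff.2 hind]; exact Nat.zero_le _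

lemma insert_mem_schmidtS (hX : X ∈ schmidtS k r B) (hr : Even r) (hb : b ∈ B) (hbX : b ∉ X) :
    insert b X ∈ schmidtS k (r + 1) B := by
  obtain ⟨hXB, hXcard, -⟩ := mem_schmidtS.1 hX
  refine mem_schmidtS.2 ⟨insert_subset hb hXB, ?_, ?_⟩
  · rw [card_insert_of_notMem hbX, hXcard, add_assoc]
  · rw [if_pos hr.add_one]
    exact rankDef_insert_le_one (indepFinset_of_mem_schmidtS hX hr) b

open scoped symmDiff in
lemma exists_odd_symmDiff_singleton_mem {R : ℕ} {Y : Finset (Fin n → ℝ)} (hR : Odd R)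
    (hY : #Y = k) (hbB : b ∈ B) (hbY : b ∉ Y) (hrR : r ≤ R) (hr : Even r)
    (hX : X ∈ schmidtS k r B) (hYX : Y ⊆ X) :
    ∃ r' ≤ R, Odd r' ∧ X ∆ {b} ∈ schmidtS k r' B ∧ Y ⊆ X ∆ {b} := by
  by_cases hbX : b ∈ X
  · rw [symmDiff_of_ge (singleton_subset_iff.2 hbX), sdiff_singleton_eq_erase]
    obtain ⟨s, rfl⟩ : ∃ s, r = s + 1 := by
      refine Nat.exists_eq_succ_of_ne_zero fun hr0 => hbY ?_
      subst hr0
      rwa [eq_of_subset_of_card_le hYX (by rw [(mem_schmidtS.1 hX).2.1, hY]; rfl)]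
    exact ⟨s, by omega, Nat.not_even_iff_odd.1 (Nat.even_add_one.1 hr),
      erase_mem_schmidtS hX hr hbX, subset_erase.2 ⟨hYX, hbY⟩⟩
  · rw [(disjoint_singleton_right.2 hbX).symmDiff_eq_sup, sup_eq_union, union_comm,
      ← insert_eq]
    have hrR : r < R := hrR.lt_of_ne fun h => Nat.not_even_iff_odd.2 hR (h ▸ hr)
    exact ⟨r + 1, hrR, hr.add_one, insert_mem_schmidtS hX hr hbB hbX,
      hYX.trans (subset_insert b X)⟩

end schmidtS

def sieveCoeff {n : ℕ} (k R : ℕ) (B Y : Finset (Fin n → ℝ)) : ℝ :=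
  ∑ r ∈ range (R + 1), (-1) ^ r * #{X ∈ schmidtS k r B | Y ⊆ X}

section sieveCoeff

variable {n k R : ℕ} {B Y : Finset (Fin n → ℝ)}

lemma sum_schmidtS_eq_sum_sieveCoeff_mul (φ : Finset (Fin n → ℝ) → ℝ) :
    ∑ r ∈ range (R + 1), (-1 : ℝ) ^ r * ∑ X ∈ schmidtS k r B, ∑ Y ∈ X.powersetCard k, φ Y
      = ∑ Y ∈ B.powersetCard k, sieveCoeff k R B Y * φ Y := by
  simp_rw [sum_sum_powersetCard_eq_sum_card_smul (fun X hX => (mem_schmidtS.1 hX).1),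
    sieveCoeff, mul_sum, sum_mul, nsmul_eq_mul, mul_assoc]
  exact sum_comm

open scoped symmDiff in
lemma sieveCoeff_nonpos (hR : Odd R) (hYB : Y ⊆ B) (hY : #Y = k) (hYne : Y ≠ B) :
    sieveCoeff k R B Y ≤ 0 := by
  obtain ⟨b, hbB, hbY⟩ := exists_of_ssubset (ssubset_of_subset_of_ne hYB hYne)
  refine alternating_sum_card_nonpos_of_injective (fun r _ r' _ hrr' => ?_)
    (symmDiff_left_injective {b}) fun r hr hre X hX => ?_
  · refine disjoint_left.2 fun X hXr hXr' => hrr' ?_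
    have := (mem_schmidtS.1 (mem_filter.1 hXr).1).2.1
    have := (mem_schmidtS.1 (mem_filter.1 hXr').1).2.1
    omega
  · rw [mem_range, Nat.lt_succ_iff] at hr
    obtain ⟨hXS, hYX⟩ := mem_filter.1 hX
    obtain ⟨r', hr'R, hr', hmem, hYX'⟩ :=
      exists_odd_symmDiff_singleton_mem hR hY hbB hbY hr hre hXS hYX
    exact ⟨r', mem_range.2 (Nat.lt_succ_of_le hr'R), hr', mem_filter.2 ⟨hmem, hYX'⟩⟩

lemma sieveCoeff_self_le_one (hB : #B = k) : sieveCoeff k R B B ≤ 1 := by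
  have heqB : ∀ r, ∀ X ∈ {X ∈ schmidtS k r B | B ⊆ X}, X = B := fun r X hX =>
    ((mem_schmidtS.1 (mem_filter.1 hX).1).1).antisymm (mem_filter.1 hX).2
  rw [sieveCoeff, sum_eq_single_of_mem 0 (mem_range.2 R.succ_pos) fun r _ hr0 => ?_]
  · rw [pow_zero, one_mul, Nat.cast_le_one]
    exact card_le_one.2 fun X hX X' hX' => (heqB 0 X hX).trans (heqB 0 X' hX').symm
  · rw [card_eq_zero.2 (eq_empty_of_forall_notMem fun X hX => hr0 ?_), Nat.cast_zero, mul_zero]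
    have := (mem_schmidtS.1 (mem_filter.1 hX).1).2.1
    rw [heqB r X hX, hB] at this
    omega

end sieveCoeff

theorem schmidt_sieve_lower_general
    (n : ℕ)
    (φ : Finset (Fin n → ℝ) → ℝ)
    (hφ0 : ∀ Y, 0 ≤ φ Y)
    (B : Finset (Fin n → ℝ)) (k : ℕ) (R₁ : ℕ) (hR₁ : Odd R₁) :
    ∑ r ∈ Finset.range (R₁ + 1), (-1 : ℝ) ^ r *
        ∑ X ∈ schmidtS k r B, ∑ Y ∈ X.powersetCard k, φ Y
      ≤ φ B * (if B.card = k then 1 else 0) := by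
  rw [sum_schmidtS_eq_sum_sieveCoeff_mul]
  split_ifs with hB
  · rw [mul_one, ← hB, powersetCard_self, sum_singleton]
    exact mul_le_of_le_one_left (hφ0 B) (sieveCoeff_self_le_one rfl)
  · rw [mul_zero]
    refine sum_nonpos fun Y hY => mul_nonpos_of_nonpos_of_nonneg ?_ (hφ0 Y)
    obtain ⟨hYB, hYk⟩ := mem_powersetCard.1 hY
    exact sieveCoeff_nonpos hR₁ hYB hYk fun h => hB (h ▸ hYk)

/-- **Proposition 3.1, lower bound.** If `φ ≥ 0` vanishes on linearly dependent sets,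
`B ⊆ ℝⁿ` is finite, `k ≥ 0` and `R₁ ≥ 0` is odd, then
`Σ_{r=0}^{R₁} (-1)ʳ Σ_{X ∈ 𝒮_{k,r}(B)} Σ_{Y ⊆ X, |Y| = k} φ(Y) ≤ φ(B)·1_{|B| = k}`. -/
theorem schmidt_sieve_lower
    (n : ℕ) (hn : 1 ≤ n)
    (φ : Finset (Fin n → ℝ) → ℝ)
    (hφ0 : ∀ Y, 0 ≤ φ Y)
    (hφdep : ∀ Y, ¬ indepFinset Y → φ Y = 0)
    (B : Finset (Fin n → ℝ)) (k : ℕ) (R₁ : ℕ) (hR₁ : Odd R₁) :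
    ∑ r ∈ Finset.range (R₁ + 1), (-1 : ℝ) ^ r *
        ∑ X ∈ schmidtS k r B, ∑ Y ∈ X.powersetCard k, φ Y
      ≤ φ B * (if B.card = k then 1 else 0) :=
  schmidt_sieve_lower_general n φ hφ0 B k R₁ hR₁
end
end

section
/- Let n ≥ 1, let φ be a function from the finite subsets of ℝ^n to [0, ∞) such that φ(Y) = 0 whenever the vectors in Y are linearly dependent, let B ⊆ ℝ^n be a finite set, let k ≥ 0 be an integer, and let R₂ ≥ 0 be an even integer. Then φ(B)·1_{{|B| = k}} ≤ Σ_{r=0}^{R₂} (−1)^r Σ_{X ∈ 𝒯_{k,r}(B)} Σ_{Y ⊆ X, |Y| = k} φ(Y). -/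
noncomputable section

/-- `𝒯_{k,r}(B)`: the subsets `X ⊆ B` with `|X| = k + r` and `δ(X) ≤ 1` if `r` is even,
`δ(X) = 0` if `r` is odd. -/
def schmidtT {n : ℕ} (k r : ℕ) (B : Finset (Fin n → ℝ)) : Finset (Finset (Fin n → ℝ)) :=
  (B.powersetCard (k + r)).filter fun X => rankDef X ≤ if Even r then 1 else 0

open Module Submodule Finset
open scoped Classical

variable {n : ℕ}

def dgood (U : Submodule ℝ (Fin n → ℝ)) (S : Finset (Fin n → ℝ)) (c : ℕ) : Prop :=
  S.card + finrank ℝ U ≤ finrank ℝ ↥(U ⊔ span ℝ (S : Set (Fin n → ℝ))) + c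

def bnd (ε : Bool) (r : ℕ) : ℕ := if (Even r ↔ ε = false) then 1 else 0

def tcount (U : Submodule ℝ (Fin n → ℝ)) (M : Finset (Fin n → ℝ)) (r : ℕ) (ε : Bool) : ℕ :=
  ((M.powersetCard r).filter (fun S => dgood U S (bnd ε r))).card

def sieveSum (U : Submodule ℝ (Fin n → ℝ)) (M : Finset (Fin n → ℝ)) (R : ℕ) (ε : Bool) : ℝ :=
  ∑ r ∈ Finset.range (R + 1), (-1 : ℝ) ^ r * tcount U M r ε

lemma dgood_empty (U : Submodule ℝ (Fin n → ℝ)) (c : ℕ) : dgood U ∅ c := by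
  have : finrank ℝ U ≤ finrank ℝ ↥(U ⊔ span ℝ ((∅ : Finset (Fin n → ℝ)) : Set (Fin n → ℝ))) :=
    Submodule.finrank_mono le_sup_left
  simp only [dgood, card_empty, zero_add]
  omega

lemma bnd_flip (ε : Bool) (r : ℕ) : bnd ε (r + 1) = bnd (!ε) r := by
  rcases ε with _ | _ <;> simp only [bnd, Nat.even_add_one] <;> by_cases h : Even r <;> simp [h]

lemma tcount_zero (U : Submodule ℝ (Fin n → ℝ)) (M : Finset (Fin n → ℝ)) (ε : Bool) :
    tcount U M 0 ε = 1 := by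
  rw [tcount, Finset.powersetCard_zero, Finset.filter_singleton, if_pos (dgood_empty U _),
    Finset.card_singleton]
lemma finrank_sup_span_singleton (U : Submodule ℝ (Fin n → ℝ)) {x : Fin n → ℝ} (hx : x ∉ U) :
    finrank ℝ ↥(U ⊔ span ℝ {x}) = finrank ℝ U + 1 := by
  have hx0 : x ≠ 0 := fun h => hx (h ▸ U.zero_mem)
  have h1 : finrank ℝ ↥(U ⊔ span ℝ {x}) ≤ finrank ℝ U + 1 := by
    refine (Submodule.finrank_add_le_finrank_add_finrank U (span ℝ {x})).trans ?_
    rw [finrank_span_singleton hx0]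
  have h2 : finrank ℝ U < finrank ℝ ↥(U ⊔ span ℝ {x}) := by
    apply Submodule.finrank_lt_finrank_of_lt
    refine lt_of_le_of_ne le_sup_left ?_
    intro h
    exact hx (h ▸ (le_sup_right : span ℝ {x} ≤ U ⊔ span ℝ {x}) (mem_span_singleton_self x))
  omega

lemma dgood_insert_of_notMem (U : Submodule ℝ (Fin n → ℝ)) {x : Fin n → ℝ} (hx : x ∉ U)
    (S : Finset (Fin n → ℝ)) (hxS : x ∉ S) (c : ℕ) :
    dgood U (insert x S) c ↔ dgood (U ⊔ span ℝ {x}) S c := by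
  have hsp : (U ⊔ span ℝ ((insert x S : Finset (Fin n → ℝ)) : Set (Fin n → ℝ)))
      = (U ⊔ span ℝ {x}) ⊔ span ℝ (S : Set (Fin n → ℝ)) := by
    rw [Finset.coe_insert, Submodule.span_insert, ← sup_assoc]
  rw [dgood, dgood, hsp, Finset.card_insert_of_notMem hxS, finrank_sup_span_singleton U hx]
  omega

/-- Splitting the count by whether `x ∈ S`, for `x ∈ M` with `x ∉ U`. -/
lemma tcount_split (U : Submodule ℝ (Fin n → ℝ)) (M : Finset (Fin n → ℝ))
    {x : Fin n → ℝ} (hxM : x ∈ M) (hxU : x ∉ U) (r : ℕ) (ε : Bool) :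
    tcount U M (r + 1) ε
      = tcount U (M.erase x) (r + 1) ε + tcount (U ⊔ span ℝ {x}) (M.erase x) r (!ε) := by
  classical
  have key : ∀ S, S ∈ (M.powersetCard (r+1)).filter (fun S => dgood U S (bnd ε (r+1))) →
      (¬ x ∈ S ↔ S ∈ (((M.erase x).powersetCard (r + 1)).filter (fun S => dgood U S (bnd ε (r+1))) : Finset _)) := by
    intro S hS
    simp only [Finset.mem_filter, Finset.mem_powersetCard, Finset.subset_erase] at hS ⊢
    tauto
  have h1 : (((M.powersetCard (r+1)).filter (fun S => dgood U S (bnd ε (r+1)))).filter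
      (fun S => ¬ x ∈ S)).card = tcount U (M.erase x) (r + 1) ε := by
    rw [tcount]
    congr 1
    ext S
    simp only [Finset.mem_filter, Finset.mem_powersetCard, Finset.subset_erase]
    tauto
  have h2 : (((M.powersetCard (r+1)).filter (fun S => dgood U S (bnd ε (r+1)))).filter
      (fun S => x ∈ S)).card = tcount (U ⊔ span ℝ {x}) (M.erase x) r (!ε) := by
    rw [tcount, ← bnd_flip]
    refine Finset.card_bij' (fun S _ => S.erase x) (fun S _ => insert x S) ?_ ?_ ?_ ?_
    · intro S hS
      simp only [Finset.mem_filter, Finset.mem_powersetCard, Finset.subset_erase] at hS ⊢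
      obtain ⟨⟨⟨hsub, hcard⟩, hd⟩, hxS⟩ := hS
      refine ⟨⟨⟨(Finset.erase_subset _ _).trans hsub, Finset.notMem_erase x S⟩, ?_⟩, ?_⟩
      · rw [Finset.card_erase_of_mem hxS, hcard]
        omega
      · have := (dgood_insert_of_notMem U hxU (S.erase x) (Finset.notMem_erase x S) (bnd ε (r+1))).mp
        rw [Finset.insert_erase hxS] at this
        exact this hd
    · intro S hS
      simp only [Finset.mem_filter, Finset.mem_powersetCard, Finset.subset_erase] at hS ⊢
      obtain ⟨⟨⟨hsub, hxS⟩, hcard⟩, hd⟩ := hS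
      refine ⟨⟨⟨Finset.insert_subset hxM hsub, ?_⟩, ?_⟩, Finset.mem_insert_self x S⟩
      · rw [Finset.card_insert_of_notMem hxS, hcard]
      · exact (dgood_insert_of_notMem U hxU S hxS _).mpr hd
    · intro S hS
      simp only [Finset.mem_filter] at hS
      exact Finset.insert_erase hS.2
    · intro S hS
      simp only [Finset.mem_filter, Finset.mem_powersetCard, Finset.subset_erase] at hS
      exact Finset.erase_insert hS.1.1.2
  rw [tcount, ← Finset.card_filter_add_card_filter_not
      (p := fun S => x ∈ S), h2, ← h1]
  ring
/-- Recursion for the sieve sum: deletion-contraction. -/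
lemma sieveSum_rec (U : Submodule ℝ (Fin n → ℝ)) (M : Finset (Fin n → ℝ))
    {x : Fin n → ℝ} (hxM : x ∈ M) (hxU : x ∉ U) (R : ℕ) (hR : 1 ≤ R) (ε : Bool) :
    sieveSum U M R ε
      = sieveSum U (M.erase x) R ε - sieveSum (U ⊔ span ℝ {x}) (M.erase x) (R - 1) (!ε) := by
  have hsplit : ∀ r : ℕ, (tcount U M r ε : ℝ)
      = tcount U (M.erase x) r ε
        + (if r = 0 then 0 else (tcount (U ⊔ span ℝ {x}) (M.erase x) (r-1) (!ε) : ℝ)) := by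
    intro r
    rcases r with _ | r
    · simp [tcount_zero]
    · rw [tcount_split U M hxM hxU r ε]
      push_cast
      simp
  have h1 : sieveSum U M R ε = sieveSum U (M.erase x) R ε
      + ∑ r ∈ Finset.range (R + 1), (-1 : ℝ) ^ r *
          (if r = 0 then 0 else (tcount (U ⊔ span ℝ {x}) (M.erase x) (r-1) (!ε) : ℝ)) := by
    rw [sieveSum, sieveSum, ← Finset.sum_add_distrib]
    refine Finset.sum_congr rfl fun r _ => ?_
    rw [hsplit r]
    ring
  rw [h1, sub_eq_add_neg]
  congr 1
  obtain ⟨R', rfl⟩ : ∃ R', R = R' + 1 := ⟨R - 1, by omega⟩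
  rw [Finset.sum_range_succ']
  simp only [Nat.add_sub_cancel, if_true, Nat.succ_ne_zero, if_false, mul_zero, add_zero]
  rw [sieveSum, ← Finset.sum_neg_distrib]
  refine Finset.sum_congr rfl fun i _ => ?_
  rw [pow_succ]
  ring
lemma sieveSum_zero (U : Submodule ℝ (Fin n → ℝ)) (M : Finset (Fin n → ℝ)) (ε : Bool) :
    sieveSum U M 0 ε = 1 := by
  rw [sieveSum]
  simp [tcount_zero]

lemma tcount_empty (U : Submodule ℝ (Fin n → ℝ)) {r : ℕ} (hr : 1 ≤ r) (ε : Bool) :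
    tcount U (∅ : Finset (Fin n → ℝ)) r ε = 0 := by
  rw [tcount, Finset.card_eq_zero]
  apply Finset.eq_empty_of_forall_notMem
  intro S hS
  simp only [Finset.mem_filter, Finset.mem_powersetCard, Finset.subset_empty] at hS
  obtain ⟨⟨rfl, hc⟩, -⟩ := hS
  simp at hc
  omega

lemma sieveSum_empty (U : Submodule ℝ (Fin n → ℝ)) (R : ℕ) (ε : Bool) :
    sieveSum U (∅ : Finset (Fin n → ℝ)) R ε = 1 := by
  rw [sieveSum, Finset.sum_eq_single 0]
  · simp [tcount_zero]
  · intro r _ hr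
    rw [tcount_empty U (by omega) ε]
    simp
  · simp

lemma tcount_subU {U : Submodule ℝ (Fin n → ℝ)} {M : Finset (Fin n → ℝ)}
    (h : ∀ y ∈ M, y ∈ U) {r : ℕ} (hr : 1 ≤ r) (ε : Bool) :
    tcount U M r ε = if r = 1 ∧ ε = true then M.card else 0 := by
  have hdg : ∀ S ∈ M.powersetCard r, (dgood U S (bnd ε r) ↔ r ≤ bnd ε r) := by
    intro S hS
    rw [Finset.mem_powersetCard] at hS
    have hsp : U ⊔ span ℝ (S : Set (Fin n → ℝ)) = U := by
      rw [sup_eq_left, Submodule.span_le]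
      exact fun y hy => h y (hS.1 hy)
    rw [dgood, hsp, hS.2]
    omega
  by_cases hc : r = 1 ∧ ε = true
  · obtain ⟨rfl, rfl⟩ := hc
    rw [if_pos ⟨rfl, rfl⟩, tcount]
    have hb : bnd true 1 = 1 := by simp [bnd]
    rw [Finset.filter_true_of_mem (fun S hS => (hdg S hS).mpr (by rw [hb]))]
    rw [Finset.card_powersetCard, Nat.choose_one_right]
  · rw [if_neg hc, tcount, Finset.card_eq_zero, Finset.filter_eq_empty_iff]
    intro S hS hd
    have := (hdg S hS).mp hd
    have hb : bnd ε r ≤ 1 := by rw [bnd]; split <;> omega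
    have hr1 : r = 1 := by omega
    subst hr1
    have : bnd ε 1 = 1 := by omega
    rw [bnd] at this
    rcases ε with _|_
    · simp at this
    · exact hc ⟨rfl, rfl⟩

lemma sieveSum_subU {U : Submodule ℝ (Fin n → ℝ)} {M : Finset (Fin n → ℝ)}
    (h : ∀ y ∈ M, y ∈ U) {R : ℕ} (hR : 1 ≤ R) :
    sieveSum U M R false = 1 ∧ sieveSum U M R true = 1 - M.card := by
  constructor
  · rw [sieveSum, Finset.sum_eq_single 0]
    · simp [tcount_zero]
    · intro r _ hr
      rw [tcount_subU h (by omega)]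
      simp [hr]
    · simp
  · rw [sieveSum]
    have hsplit : Finset.range (R + 1) = insert 0 (insert 1 (Finset.Ico 2 (R+1))) := by
      ext i
      simp only [Finset.mem_range, Finset.mem_insert, Finset.mem_Ico]
      omega
    rw [hsplit, Finset.sum_insert (by simp), Finset.sum_insert (by simp)]
    rw [Finset.sum_eq_zero (fun r hr => by
      rw [Finset.mem_Ico] at hr
      rw [tcount_subU h (by omega),
        if_neg (fun hc => absurd hc.1 (by omega : r ≠ 1))]
      simp)]
    rw [tcount_zero, tcount_subU h le_rfl]
    simp
    ring
/-- Main combinatorial lemma: the truncated alternating sieve sums are bounded. -/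
lemma sieve_main : ∀ m : ℕ, ∀ M : Finset (Fin n → ℝ), M.card = m →
    ∀ U : Submodule ℝ (Fin n → ℝ), ∀ R : ℕ,
    (Even R → (if M = ∅ then (1:ℝ) else 0) ≤ sieveSum U M R false) ∧
    (Odd R → sieveSum U M R true ≤ (if M = ∅ then (1:ℝ) else 0)) := by
  intro m
  induction m using Nat.strong_induction_on with
  | _ m IH =>
    intro M hM U R
    rcases eq_or_ne M ∅ with rfl | hMne
    · rw [sieveSum_empty, sieveSum_empty, if_pos rfl]
      exact ⟨fun _ => le_rfl, fun _ => le_rfl⟩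
    · rw [if_neg hMne]
      by_cases hex : ∃ x ∈ M, x ∉ U
      · obtain ⟨x, hxM, hxU⟩ := hex
        have hcard : (M.erase x).card < m := by
          rw [Finset.card_erase_of_mem hxM, hM]
          have : 1 ≤ m := by
            rw [← hM]
            exact Finset.card_pos.mpr ⟨x, hxM⟩
          omega
        constructor
        · intro hRe
          rcases Nat.eq_zero_or_pos R with rfl | hR1
          · rw [sieveSum_zero]; norm_num
          · rw [sieveSum_rec U M hxM hxU R hR1 false]
            have h1 := (IH _ hcard (M.erase x) rfl U R).1 hRe
            have h2 := (IH _ hcard (M.erase x) rfl (U ⊔ span ℝ {x}) (R-1)).2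
              (by
                rcases hRe with ⟨t, ht⟩
                exact ⟨t - 1, by omega⟩)
            have := sub_le_sub h1 h2
            simp only [Bool.not_false]
            linarith [h1, h2]
        · intro hRo
          have hR1 : 1 ≤ R := hRo.pos
          rw [sieveSum_rec U M hxM hxU R hR1 true]
          have h1 := (IH _ hcard (M.erase x) rfl U R).2 hRo
          have h2 := (IH _ hcard (M.erase x) rfl (U ⊔ span ℝ {x}) (R-1)).1
            (by
              rcases hRo with ⟨t, ht⟩
              exact ⟨t, by omega⟩)
          simp only [Bool.not_true]
          linarith [h1, h2]
      · push_neg at hex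
        constructor
        · intro _
          rcases Nat.eq_zero_or_pos R with rfl | hR1
          · rw [sieveSum_zero]; norm_num
          · rw [(sieveSum_subU hex hR1).1]; norm_num
        · intro hRo
          rw [(sieveSum_subU hex hRo.pos).2]
          have : 1 ≤ M.card := Finset.card_pos.mpr (Finset.nonempty_iff_ne_empty.mpr hMne)
          have : (1:ℝ) ≤ (M.card : ℝ) := by exact_mod_cast this
          linarith
lemma rankDef_le_iff (X : Finset (Fin n → ℝ)) (c : ℕ) :
    rankDef X ≤ c ↔ X.card ≤ rankOf X + c := by
  rw [rankDef]
  omega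

lemma finrank_span_indep {Y : Finset (Fin n → ℝ)} (hY : indepFinset Y) :
    finrank ℝ ↥(span ℝ (Y : Set (Fin n → ℝ))) = Y.card := by
  classical
  rw [finrank_span_set_eq_card hY]
  simp

lemma rankDef_union_iff {Y S : Finset (Fin n → ℝ)} (hY : indepFinset Y)
    (hd : Disjoint Y S) (c : ℕ) :
    rankDef (Y ∪ S) ≤ c ↔ dgood (span ℝ (Y : Set (Fin n → ℝ))) S c := by
  rw [rankDef_le_iff, dgood, Finset.card_union_of_disjoint hd, finrank_span_indep hY, rankOf]
  have : span ℝ ((Y ∪ S : Finset (Fin n → ℝ)) : Set (Fin n → ℝ))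
      = span ℝ (Y : Set (Fin n → ℝ)) ⊔ span ℝ (S : Set (Fin n → ℝ)) := by
    rw [Finset.coe_union, Submodule.span_union]
  rw [this]
  omega

lemma count_eq_tcount {B Y : Finset (Fin n → ℝ)} {k : ℕ} (hYB : Y ⊆ B) (hYk : Y.card = k)
    (hY : indepFinset Y) (r : ℕ) :
    ((schmidtT k r B).filter (fun X => Y ⊆ X)).card
      = tcount (span ℝ (Y : Set (Fin n → ℝ))) (B \ Y) r false := by
  classical
  have hbnd : bnd false r = if Even r then 1 else 0 := by
    simp [bnd]
  rw [tcount, hbnd]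
  refine Finset.card_bij' (fun X _ => X \ Y) (fun S _ => Y ∪ S) ?_ ?_ ?_ ?_
  · intro X hX
    simp only [Finset.mem_filter, schmidtT, Finset.mem_powersetCard] at hX ⊢
    obtain ⟨⟨⟨hXB, hXc⟩, hXd⟩, hYX⟩ := hX
    have hcard : (X \ Y).card = r := by
      rw [Finset.card_sdiff_of_subset hYX, hXc, hYk]
      omega
    refine ⟨⟨Finset.sdiff_subset_sdiff hXB le_rfl, hcard⟩, ?_⟩
    have hun : Y ∪ (X \ Y) = X := Finset.union_sdiff_of_subset hYX
    have h2 : rankDef (Y ∪ (X \ Y)) ≤ (if Even r then 1 else 0) := by rw [hun]; exact hXd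
    exact (rankDef_union_iff hY Finset.disjoint_sdiff _).mp h2
  · intro S hS
    simp only [Finset.mem_filter, schmidtT, Finset.mem_powersetCard] at hS ⊢
    obtain ⟨⟨hSB, hSc⟩, hSd⟩ := hS
    have hdisj : Disjoint Y S := Finset.disjoint_left.mpr
      (fun a haY haS => (Finset.mem_sdiff.mp (hSB haS)).2 haY)
    refine ⟨⟨⟨Finset.union_subset hYB (hSB.trans (Finset.sdiff_subset)), ?_⟩, ?_⟩,
      Finset.subset_union_left⟩
    · rw [Finset.card_union_of_disjoint hdisj, hYk, hSc]
    · exact (rankDef_union_iff hY hdisj _).mpr hSd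
  · intro X hX
    simp only [Finset.mem_filter] at hX
    exact Finset.union_sdiff_of_subset hX.2
  · intro S hS
    simp only [Finset.mem_filter, Finset.mem_powersetCard] at hS
    have hdisj : Disjoint Y S := Finset.disjoint_left.mpr
      (fun a haY haS => (Finset.mem_sdiff.mp (hS.1.1 haS)).2 haY)
    show (Y ∪ S) \ Y = S
    rw [Finset.union_sdiff_cancel_left hdisj]

/-- **Proposition 3.1, upper bound.** If `φ ≥ 0` vanishes on linearly dependent sets,
`B ⊆ ℝⁿ` is finite, `k ≥ 0` and `R₂ ≥ 0` is even, then
`φ(B)·1_{|B| = k} ≤ Σ_{r=0}^{R₂} (-1)ʳ Σ_{X ∈ 𝒯_{k,r}(B)} Σ_{Y ⊆ X, |Y| = k} φ(Y)`. -/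
theorem schmidt_sieve_upper
    (n : ℕ) (hn : 1 ≤ n)
    (φ : Finset (Fin n → ℝ) → ℝ)
    (hφ0 : ∀ Y, 0 ≤ φ Y)
    (hφdep : ∀ Y, ¬ indepFinset Y → φ Y = 0)
    (B : Finset (Fin n → ℝ)) (k : ℕ) (R₂ : ℕ) (hR₂ : Even R₂) :
    φ B * (if B.card = k then 1 else 0)
      ≤ ∑ r ∈ Finset.range (R₂ + 1), (-1 : ℝ) ^ r *
          ∑ X ∈ schmidtT k r B, ∑ Y ∈ X.powersetCard k, φ Y := by
  classical
  set cnt : ℕ → Finset (Fin n → ℝ) → ℕ :=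
    fun r Y => ((schmidtT k r B).filter fun X => Y ⊆ X).card with hcnt
  -- Step 1: rewrite the right-hand side as a sum over Y
  have hrhs : ∑ r ∈ Finset.range (R₂ + 1), (-1 : ℝ) ^ r *
          ∑ X ∈ schmidtT k r B, ∑ Y ∈ X.powersetCard k, φ Y
      = ∑ Y ∈ B.powersetCard k,
          (∑ r ∈ Finset.range (R₂ + 1), (-1 : ℝ) ^ r * (cnt r Y : ℝ)) * φ Y := by
    have hinner : ∀ r, ∑ X ∈ schmidtT k r B, ∑ Y ∈ X.powersetCard k, φ Y
        = ∑ Y ∈ B.powersetCard k, (cnt r Y : ℝ) * φ Y := by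
      intro r
      have h1 : ∀ X ∈ schmidtT k r B, ∑ Y ∈ X.powersetCard k, φ Y
          = ∑ Y ∈ B.powersetCard k, if Y ⊆ X then φ Y else 0 := by
        intro X hX
        have hXB : X ⊆ B := by
          simp only [schmidtT, Finset.mem_filter, Finset.mem_powersetCard] at hX
          exact hX.1.1
        rw [← Finset.sum_filter]
        refine Finset.sum_congr ?_ (fun _ _ => rfl)
        ext Y
        simp only [Finset.mem_filter, Finset.mem_powersetCard]
        exact ⟨fun h => ⟨⟨h.1.trans hXB, h.2⟩, h.1⟩, fun h => ⟨h.2, h.1.2⟩⟩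
      rw [Finset.sum_congr rfl h1, Finset.sum_comm]
      refine Finset.sum_congr rfl fun Y _ => ?_
      rw [← Finset.sum_filter, Finset.sum_const, nsmul_eq_mul]
    rw [Finset.sum_congr rfl (fun r _ => by rw [hinner r])]
    simp_rw [Finset.mul_sum]
    rw [Finset.sum_comm]
    refine Finset.sum_congr rfl fun Y _ => ?_
    rw [Finset.sum_mul]
    refine Finset.sum_congr rfl fun r _ => ?_
    ring
  rw [hrhs]
  -- Step 2: the left-hand side
  have hlhs : φ B * (if B.card = k then 1 else 0)
      = ∑ Y ∈ B.powersetCard k, (if Y = B then (1:ℝ) else 0) * φ Y := by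
    rw [Finset.sum_congr rfl (fun Y _ => by rw [ite_mul, one_mul, zero_mul])]
    rw [Finset.sum_ite_eq' (B.powersetCard k) B φ]
    have : B ∈ B.powersetCard k ↔ B.card = k := by
      simp [Finset.mem_powersetCard]
    simp only [this]
    split_ifs with h <;> ring
  rw [hlhs]
  -- Step 3: termwise comparison
  refine Finset.sum_le_sum fun Y hY => ?_
  rw [Finset.mem_powersetCard] at hY
  obtain ⟨hYB, hYk⟩ := hY
  by_cases hind : indepFinset Y
  · refine mul_le_mul_of_nonneg_right ?_ (hφ0 Y)
    have heq : ∑ r ∈ Finset.range (R₂ + 1), (-1 : ℝ) ^ r * (cnt r Y : ℝ)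
        = sieveSum (span ℝ (Y : Set (Fin n → ℝ))) (B \ Y) R₂ false := by
      rw [sieveSum]
      refine Finset.sum_congr rfl fun r _ => ?_
      simp only [hcnt, count_eq_tcount hYB hYk hind r]
    rw [heq]
    have hmain := (sieve_main (B \ Y).card (B \ Y) rfl
      (span ℝ (Y : Set (Fin n → ℝ))) R₂).1 hR₂
    have hiff : (B \ Y = ∅) ↔ Y = B := by
      rw [Finset.sdiff_eq_empty_iff_subset]
      exact ⟨fun h => le_antisymm hYB h, fun h => h ▸ le_rfl⟩
    split_ifs with h1
    · rw [if_pos (hiff.mpr h1)] at hmain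
      exact hmain
    · rw [if_neg (fun h => h1 (hiff.mp h))] at hmain
      exact hmain
  · rw [hφdep Y hind, mul_zero, mul_zero]
end
end

section
/- Let n ≥ 1, let A ⊆ B ⊆ ℝ^n be finite sets, assume the vectors of A are linearly independent, and let R₂ ≥ 0 be an even integer. Then 1_{{A = B}} ≤ Σ_{r=0}^{R₂} (−1)^r τ_r(A, B). -/
noncomputable section

/-- `τ_r(A, B)`: the number of subsets `Z ⊆ B \ A` with `|Z| = r` such that
`δ(A ∪ Z) ≤ 1` if `r` is even, and `δ(A ∪ Z) = 0` if `r` is odd. -/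
def tauCount {n : ℕ} (r : ℕ) (A B : Finset (Fin n → ℝ)) : ℕ :=
  (((B \ A).powersetCard r).filter fun Z =>
    rankDef (A ∪ Z) ≤ if Even r then 1 else 0).card

/-!
If `B \ A = ∅`, only `Z = ∅` is counted and the sum is `τ₀ = 1`, since `δ(A) = 0`. Otherwise the
sum is a signed count of the sets `Z ⊆ B \ A` with `|Z| ≤ R₂` that the `τ_r` count, and for a fixed
`c ∈ B \ A` the toggle `Z ↦ Z ∆ {c}` maps the odd ones (`δ(A ∪ Z) = 0`, `|Z| < R₂`) injectively to
even ones (`δ ≤ 1`), so the sum is nonnegative.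
-/

open Finset
open scoped symmDiff

section SignedCount

variable {α : Type*} [DecidableEq α]

lemma Finset.even_card_symmDiff_singleton_iff (Z : Finset α) (c : α) :
    Even (Z ∆ {c}).card ↔ ¬Even Z.card := by
  by_cases hc : c ∈ Z
  · rw [symmDiff_of_ge (singleton_subset_iff.mpr hc), card_sdiff_of_subset
      (singleton_subset_iff.mpr hc), card_singleton]
    rw [Nat.even_sub (card_pos.mpr ⟨c, hc⟩), iff_false_right Nat.not_even_one]
  · rw [symmDiff_eq_union (disjoint_singleton_right.mpr hc), card_union_of_disjoint
      (disjoint_singleton_right.mpr hc), card_singleton, Nat.even_add_one]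

lemma Finset.card_symmDiff_singleton_le (Z : Finset α) (c : α) :
    (Z ∆ {c}).card ≤ Z.card + 1 :=
  (card_le_card symmDiff_subset_union).trans (card_union_le _ _)

lemma Finset.sum_neg_one_pow_card_nonneg {R : Type*} [Ring R] [PartialOrder R]
    [IsOrderedRing R] (G : Finset (Finset α)) (c : α)
    (hG : ∀ Z ∈ G, ¬Even Z.card → Z ∆ {c} ∈ G) :
    0 ≤ ∑ Z ∈ G, (-1 : R) ^ Z.card := by
  have hle : (G.filter fun Z => ¬Even Z.card).card ≤ (G.filter fun Z => Even Z.card).card := by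
    refine card_le_card_of_injOn (· ∆ {c}) (fun Z hZ => ?_) (symmDiff_left_injective _).injOn
    obtain ⟨hZG, hodd⟩ := mem_filter.mp hZ
    exact mem_filter.mpr ⟨hG Z hZG hodd, (even_card_symmDiff_singleton_iff Z c).mpr hodd⟩
  rw [← sum_filter_add_sum_filter_not G (fun Z => Even Z.card),
    sum_congr rfl fun Z hZ => (mem_filter.mp hZ).2.neg_one_pow,
    sum_congr rfl fun Z hZ => (Nat.not_even_iff_odd.mp (mem_filter.mp hZ).2).neg_one_pow,
    sum_const, sum_const, smul_neg, nsmul_one, nsmul_one, ← sub_eq_add_neg, sub_nonneg]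
  exact Nat.mono_cast hle

end SignedCount

section RankDeficiency

variable {n : ℕ}

lemma rankOf_mono {X Y : Finset (Fin n → ℝ)} (h : X ⊆ Y) : rankOf X ≤ rankOf Y :=
  Submodule.finrank_mono (Submodule.span_mono (by exact_mod_cast h))

lemma rankOf_union_le (X Y : Finset (Fin n → ℝ)) : rankOf (X ∪ Y) ≤ rankOf X + Y.card := by
  unfold rankOf
  rw [coe_union, Submodule.span_union]
  exact (Submodule.finrank_add_le_finrank_add_finrank _ _).trans
    (Nat.add_le_add_left (finrank_span_finset_le_card Y) _)

lemma rankDef_mono {X Y : Finset (Fin n → ℝ)} (h : X ⊆ Y) : rankDef X ≤ rankDef Y := by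
  have hrank := rankOf_union_le X (Y \ X)
  have hcard := card_sdiff_add_card_eq_card h
  rw [union_sdiff_of_subset h] at hrank
  unfold rankDef
  omega

lemma rankDef_insert_le (a : Fin n → ℝ) (X : Finset (Fin n → ℝ)) :
    rankDef (insert a X) ≤ rankDef X + 1 := by
  have hrank := rankOf_mono (subset_insert a X)
  have hcard := card_insert_le a X
  unfold rankDef
  omega

lemma rankDef_eq_zero_of_indepFinset {X : Finset (Fin n → ℝ)} (hX : indepFinset X) :
    rankDef X = 0 := by
  rw [rankDef, rankOf, finrank_span_finset_eq_card hX, Nat.sub_self]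

end RankDeficiency

section TauFamily

variable {n : ℕ}

/-- The sets counted by `τ_r(A, B)` for some `r ≤ R`. -/
def tauFamily (R : ℕ) (A B : Finset (Fin n → ℝ)) : Finset (Finset (Fin n → ℝ)) :=
  (B \ A).powerset.filter fun Z =>
    Z.card ≤ R ∧ rankDef (A ∪ Z) ≤ if Even Z.card then 1 else 0

lemma mem_tauFamily {R : ℕ} {A B Z : Finset (Fin n → ℝ)} :
    Z ∈ tauFamily R A B ↔
      Z ⊆ B \ A ∧ Z.card ≤ R ∧ rankDef (A ∪ Z) ≤ if Even Z.card then 1 else 0 := by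
  rw [tauFamily, mem_filter, mem_powerset]

lemma sum_tauCount_eq_sum_tauFamily (R : ℕ) (A B : Finset (Fin n → ℝ)) :
    ∑ r ∈ range (R + 1), (-1 : ℝ) ^ r * (tauCount r A B : ℝ) =
      ∑ Z ∈ tauFamily R A B, (-1 : ℝ) ^ Z.card := by
  rw [← sum_fiberwise_of_maps_to (g := card) (t := range (R + 1))
    fun Z hZ => mem_range.mpr (Nat.lt_succ_of_le (mem_tauFamily.mp hZ).2.1)]
  refine sum_congr rfl fun r hr => ?_
  have hfiber : (tauFamily R A B).filter (fun Z => Z.card = r) =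
      ((B \ A).powersetCard r).filter fun Z => rankDef (A ∪ Z) ≤ if Even r then 1 else 0 := by
    ext Z
    simp only [mem_filter, mem_tauFamily, mem_powersetCard]
    constructor
    · rintro ⟨⟨hZ, -, hdef⟩, rfl⟩
      exact ⟨⟨hZ, rfl⟩, hdef⟩
    · rintro ⟨⟨hZ, rfl⟩, hdef⟩
      exact ⟨⟨hZ, Nat.lt_succ_iff.mp (mem_range.mp hr), hdef⟩, rfl⟩
  rw [sum_congr rfl fun Z hZ => by rw [(mem_filter.mp hZ).2], sum_const, hfiber, nsmul_eq_mul,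
    mul_comm, tauCount]

lemma tauFamily_eq_singleton_empty {R : ℕ} {A B : Finset (Fin n → ℝ)} (hA : indepFinset A)
    (hBA : B \ A = ∅) : tauFamily R A B = {∅} := by
  ext Z
  rw [mem_tauFamily, hBA, subset_empty, mem_singleton]
  constructor
  · exact fun h => h.1
  · rintro rfl
    simp [rankDef_eq_zero_of_indepFinset hA]

lemma symmDiff_singleton_mem_tauFamily {R : ℕ} (hR : Even R) {A B Z : Finset (Fin n → ℝ)}
    {c : Fin n → ℝ} (hc : c ∈ B \ A) (hZ : Z ∈ tauFamily R A B) (hodd : ¬Even Z.card) :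
    Z ∆ {c} ∈ tauFamily R A B := by
  obtain ⟨hZsub, hZcard, hZdef⟩ := mem_tauFamily.mp hZ
  rw [if_neg hodd, Nat.le_zero] at hZdef
  have hsub : A ∪ Z ∆ {c} ⊆ insert c (A ∪ Z) := by
    intro x hx
    simp only [mem_union, mem_symmDiff, mem_singleton, mem_insert] at hx ⊢
    tauto
  have hcard : Z.card < R := lt_of_le_of_ne hZcard fun h => hodd (h ▸ hR)
  refine mem_tauFamily.mpr ⟨symmDiff_subset_union.trans (union_subset hZsub
    (singleton_subset_iff.mpr hc)), (card_symmDiff_singleton_le Z c).trans hcard, ?_⟩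
  rw [if_pos ((even_card_symmDiff_singleton_iff Z c).mpr hodd)]
  calc rankDef (A ∪ Z ∆ {c}) ≤ rankDef (insert c (A ∪ Z)) := rankDef_mono hsub
    _ ≤ 1 := by simpa [hZdef] using rankDef_insert_le c (A ∪ Z)

end TauFamily

theorem sieve_tau_upper_general
    (n : ℕ)
    (A B : Finset (Fin n → ℝ)) (hA : indepFinset A)
    (R₂ : ℕ) (hR₂ : Even R₂) :
    (if A = B then (1 : ℝ) else 0)
      ≤ ∑ r ∈ Finset.range (R₂ + 1), (-1 : ℝ) ^ r * (tauCount r A B : ℝ) := by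
  rw [sum_tauCount_eq_sum_tauFamily]
  rcases (B \ A).eq_empty_or_nonempty with hBA | ⟨c, hc⟩
  · rw [tauFamily_eq_singleton_empty hA hBA, sum_singleton, card_empty, pow_zero]
    split_ifs <;> norm_num
  · have hAB : A ≠ B := fun h => (mem_sdiff.mp hc).2 (h ▸ (mem_sdiff.mp hc).1)
    rw [if_neg hAB]
    exact sum_neg_one_pow_card_nonneg _ c fun Z hZ hodd =>
      symmDiff_singleton_mem_tauFamily hR₂ hc hZ hodd

/-- **Lemma 3.2, upper bound.** If `A ⊆ B ⊆ ℝⁿ` are finite, `A` consists of linearly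
independent vectors, and `R₂ ≥ 0` is even, then
`1_{A = B} ≤ Σ_{r=0}^{R₂} (-1)ʳ τ_r(A, B)`. -/
theorem sieve_tau_upper
    (n : ℕ) (hn : 1 ≤ n)
    (A B : Finset (Fin n → ℝ)) (hAB : A ⊆ B) (hA : indepFinset A)
    (R₂ : ℕ) (hR₂ : Even R₂) :
    (if A = B then (1 : ℝ) else 0)
      ≤ ∑ r ∈ Finset.range (R₂ + 1), (-1 : ℝ) ^ r * (tauCount r A B : ℝ) :=
  sieve_tau_upper_general n A B hA R₂ hR₂
end
end

section
/- Let n ≥ 1, let A ⊆ B ⊆ ℝ^n be finite sets with the vectors of A linearly independent, and set N = |B ∖ A|. For an integer r ≥ 0 let 𝒫_r = {Z ⊆ B ∖ A : |Z| = r and the vectors of A ∪ Z are linearly independent}. Then for every integer r with 0 ≤ r ≤ N − 1, |𝒫_r| · C(N, r+1) ≥ |𝒫_{r+1}| · C(N, r); equivalently, the probability p_r = |𝒫_r| / C(N, r) that a uniformly random completion of A by r elements of B ∖ A remains linearly independent is non-increasing in r. -/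
noncomputable section

open scoped Classical in
/-- `|𝒫_r|`: the number of subsets `Z ⊆ B \ A` with `|Z| = r` such that the vectors
of `A ∪ Z` are linearly independent. -/
def pCount {n : ℕ} (r : ℕ) (A B : Finset (Fin n → ℝ)) : ℕ :=
  (((B \ A).powersetCard r).filter fun Z => indepFinset (A ∪ Z)).card

/-! Independence of `A ∪ Z` passes to subsets of `Z`, so the sets counted by `pCount` form a
down-closed family of subsets of the `N`-element set `B \ A`. Double counting the pairs
`Z' ⊆ Z` of members of sizes `r` and `r + 1`: each `Z` contains `r + 1` of them and each `Z'`
lies in at most `N - r`, so `|𝒫_{r+1}| (r + 1) ≤ |𝒫_r| (N - r)`, and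
`C(N, r + 1) (r + 1) = C(N, r) (N - r)` turns this into the claim. -/

lemma indepFinset_mono {n : ℕ} {X Y : Finset (Fin n → ℝ)} (h : Y ⊆ X)
    (hX : indepFinset X) : indepFinset Y :=
  LinearIndepOn.mono (R := ℝ) (v := id) hX (by exact_mod_cast h)

namespace Finset

variable {α : Type*} [DecidableEq α] {P : Finset α → Prop} [DecidablePred P]

lemma card_filter_powersetCard_succ_mul_le (D : Finset α) (hP : Antitone P) (r : ℕ) :
    #{Z ∈ D.powersetCard (r + 1) | P Z} * (r + 1) ≤ #{Z ∈ D.powersetCard r | P Z} * (#D - r) := by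
  refine card_mul_le_card_mul (· ⊇ ·) (fun Z hZ => ?_) (fun Z' hZ' => ?_)
  · obtain ⟨hZD, hZcard⟩ := mem_powersetCard.1 (mem_filter.1 hZ).1
    have hsub : Z.powersetCard r ⊆ {Z' ∈ D.powersetCard r | P Z'}.bipartiteAbove (· ⊇ ·) Z := by
      intro Z' hZ'
      obtain ⟨hZ'Z, hZ'card⟩ := mem_powersetCard.1 hZ'
      simp only [mem_bipartiteAbove, mem_filter, mem_powersetCard]
      exact ⟨⟨⟨hZ'Z.trans hZD, hZ'card⟩, hP hZ'Z (mem_filter.1 hZ).2⟩, hZ'Z⟩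
    calc r + 1 = #(Z.powersetCard r) := by
          rw [card_powersetCard, hZcard, Nat.choose_succ_self_right]
      _ ≤ _ := card_le_card hsub
  · obtain ⟨hZ'D, hZ'card⟩ := mem_powersetCard.1 (mem_filter.1 hZ').1
    have hsub : {Z ∈ D.powersetCard (r + 1) | P Z}.bipartiteBelow (· ⊇ ·) Z' ⊆
        (D \ Z').image (insert · Z') := by
      intro Z hZ
      simp only [mem_bipartiteBelow, mem_filter, mem_powersetCard] at hZ
      obtain ⟨⟨⟨hZD, hZcard⟩, -⟩, hZ'Z⟩ := hZ
      obtain ⟨a, ha, rfl⟩ := exists_eq_insert_iff.2 ⟨hZ'Z, by omega⟩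
      exact mem_image_of_mem _ (mem_sdiff.2 ⟨hZD (mem_insert_self a Z'), ha⟩)
    calc _ ≤ #((D \ Z').image (insert · Z')) := card_le_card hsub
      _ ≤ #(D \ Z') := card_image_le
      _ = #D - r := by rw [card_sdiff_of_subset hZ'D, hZ'card]

lemma card_filter_powersetCard_succ_mul_choose_le (D : Finset α) (hP : Antitone P) (r : ℕ) :
    #{Z ∈ D.powersetCard (r + 1) | P Z} * (#D).choose r
      ≤ #{Z ∈ D.powersetCard r | P Z} * (#D).choose (r + 1) := by
  refine Nat.le_of_mul_le_mul_right ?_ r.succ_pos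
  calc #{Z ∈ D.powersetCard (r + 1) | P Z} * (#D).choose r * (r + 1)
      = #{Z ∈ D.powersetCard (r + 1) | P Z} * (r + 1) * (#D).choose r := by ring
    _ ≤ #{Z ∈ D.powersetCard r | P Z} * (#D - r) * (#D).choose r :=
      Nat.mul_le_mul_right _ (card_filter_powersetCard_succ_mul_le D hP r)
    _ = #{Z ∈ D.powersetCard r | P Z} * (#D).choose (r + 1) * (r + 1) := by
      rw [mul_assoc, mul_assoc, mul_comm (#D - r), ← Nat.choose_succ_right_eq]

end Finset

theorem pCount_monotone_general
    (n : ℕ)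
    (A B : Finset (Fin n → ℝ))
    (r : ℕ) :
    pCount (r + 1) A B * Nat.choose (B \ A).card r
      ≤ pCount r A B * Nat.choose (B \ A).card (r + 1) := by
  classical
  have hP : Antitone fun Z => indepFinset (A ∪ Z) := fun _ _ h =>
    indepFinset_mono (Finset.union_subset_union_right h)
  unfold pCount
  convert Finset.card_filter_powersetCard_succ_mul_choose_le (B \ A) hP r

/-- The probability `p_r = |𝒫_r| / C(N, r)` that a uniformly random completion of `A`
by `r` elements of `B \ A` remains linearly independent is non-increasing in `r`:
for `0 ≤ r ≤ N - 1`, `|𝒫_{r+1}| · C(N, r) ≤ |𝒫_r| · C(N, r+1)`, where `N = |B \ A|`. -/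
theorem pCount_monotone
    (n : ℕ) (hn : 1 ≤ n)
    (A B : Finset (Fin n → ℝ)) (hAB : A ⊆ B) (hA : indepFinset A)
    (r : ℕ) (hr : r + 1 ≤ (B \ A).card) :
    pCount (r + 1) A B * Nat.choose (B \ A).card r
      ≤ pCount r A B * Nat.choose (B \ A).card (r + 1) :=
  pCount_monotone_general n A B r
end
end

section
/- Let n ≥ 1, let A ⊆ B ⊆ ℝ^n be finite sets with the vectors of A linearly independent, and set N = |B ∖ A|. For an integer r ≥ 0 let 𝒫_r = {Z ⊆ B ∖ A : |Z| = r and the vectors of A ∪ Z are linearly independent} and 𝒬_r = {Z ⊆ B ∖ A : |Z| = r and δ(A ∪ Z) ≤ 1}. Then for every integer r with 0 ≤ r ≤ N − 1, |𝒫_r| · C(N, r+1) ≤ |𝒬_{r+1}| · C(N, r); equivalently, p_r = |𝒫_r| / C(N, r) satisfies p_r ≤ q_{r+1} = |𝒬_{r+1}| / C(N, r+1). -/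
noncomputable section

/-- `|𝒬_r|`: the number of subsets `Z ⊆ B \ A` with `|Z| = r` and `δ(A ∪ Z) ≤ 1`. -/
def qCount {n : ℕ} (r : ℕ) (A B : Finset (Fin n → ℝ)) : ℕ :=
  (((B \ A).powersetCard r).filter fun Z => rankDef (A ∪ Z) ≤ 1).card

open Finset

lemma rankOf_of_indep {n : ℕ} {Y : Finset (Fin n → ℝ)} (h : indepFinset Y) :
    rankOf Y = Y.card :=
  finrank_span_finset_eq_card h

lemma rankDef_insert_le_s13 {n : ℕ} {Y : Finset (Fin n → ℝ)} (h : indepFinset Y)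
    (x : Fin n → ℝ) : rankDef (insert x Y) ≤ 1 := by
  classical
  have hspan : Submodule.span ℝ (Y : Set (Fin n → ℝ)) ≤
      Submodule.span ℝ ((insert x Y : Finset (Fin n → ℝ)) : Set (Fin n → ℝ)) := by
    apply Submodule.span_mono
    rw [Finset.coe_insert]
    exact Set.subset_insert _ _
  have hrank : Y.card ≤ rankOf (insert x Y) := by
    rw [← rankOf_of_indep h]
    exact Submodule.finrank_mono hspan
  have hcard : (insert x Y).card ≤ Y.card + 1 := Finset.card_insert_le _ _
  unfold rankDef
  omega

theorem pCount_le_qCount_succ'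
    (n : ℕ) (hn : 1 ≤ n)
    (A B : Finset (Fin n → ℝ)) (hAB : A ⊆ B) (hA : indepFinset A)
    (r : ℕ) (hr : r + 1 ≤ (B \ A).card) :
    pCount r A B * Nat.choose (B \ A).card (r + 1)
      ≤ qCount (r + 1) A B * Nat.choose (B \ A).card r := by
  classical
  set N := (B \ A).card with hN
  set s := ((B \ A).powersetCard r).filter fun Z => indepFinset (A ∪ Z) with hs
  set t := ((B \ A).powersetCard (r + 1)).filter fun Z => rankDef (A ∪ Z) ≤ 1 with ht
  have key : s.card * (N - r) ≤ t.card * (r + 1) := by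
    apply Finset.card_mul_le_card_mul (fun Z W => Z ⊆ W)
    · intro Z hZ
      simp only [hs, Finset.mem_filter, Finset.mem_powersetCard] at hZ
      obtain ⟨⟨hZsub, hZcard⟩, hZindep⟩ := hZ
      have hinj : Set.InjOn (fun x => insert x Z) ((B \ A) \ Z : Finset _) := by
        intro x hx y hy hxy
        simp only [Finset.mem_coe, Finset.mem_sdiff] at hx hy
        have hxy' : insert x Z = insert y Z := hxy
        have : x ∈ insert y Z := hxy' ▸ Finset.mem_insert_self x Z
        rcases Finset.mem_insert.1 this with h | h
        · exact h
        · exact absurd h hx.2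
      have hmaps : ∀ x ∈ (B \ A) \ Z, insert x Z ∈ t.bipartiteAbove (fun Z W => Z ⊆ W) Z := by
        intro x hx
        simp only [Finset.mem_sdiff] at hx
        simp only [Finset.bipartiteAbove, ht, Finset.mem_filter, Finset.mem_powersetCard]
        refine ⟨⟨⟨Finset.insert_subset (Finset.mem_sdiff.mpr hx.1) hZsub, by rw [Finset.card_insert_of_notMem hx.2, hZcard]⟩, ?_⟩, Finset.subset_insert _ _⟩
        have : A ∪ insert x Z = insert x (A ∪ Z) := by
          ext y; simp [or_left_comm]
        rw [this]
        exact rankDef_insert_le_s13 hZindep x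
      calc N - r = ((B \ A) \ Z).card := by
            rw [Finset.card_sdiff_of_subset hZsub, hZcard]
        _ ≤ _ := Finset.card_le_card_of_injOn _ hmaps hinj
    · intro W hW
      simp only [ht, Finset.mem_filter, Finset.mem_powersetCard] at hW
      have hsub : s.bipartiteBelow (fun Z W => Z ⊆ W) W ⊆ W.powersetCard r := by
        intro Z hZ
        simp only [Finset.bipartiteBelow, hs, Finset.mem_filter,
          Finset.mem_powersetCard] at hZ ⊢
        exact ⟨hZ.2, hZ.1.1.2⟩
      calc (s.bipartiteBelow (fun Z W => Z ⊆ W) W).card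
          ≤ (W.powersetCard r).card := Finset.card_le_card hsub
        _ = Nat.choose (r + 1) r := by rw [Finset.card_powersetCard, hW.1.2]
        _ = r + 1 := by simp
  have hid : Nat.choose N (r + 1) * (r + 1) = Nat.choose N r * (N - r) :=
    Nat.choose_succ_right_eq N r
  have hfin : s.card * Nat.choose N (r + 1) * (r + 1) ≤ t.card * Nat.choose N r * (r + 1) := by
    calc s.card * Nat.choose N (r + 1) * (r + 1)
        = s.card * (Nat.choose N (r + 1) * (r + 1)) := by ring
      _ = s.card * (N - r) * Nat.choose N r := by rw [hid]; ring
      _ ≤ t.card * (r + 1) * Nat.choose N r := Nat.mul_le_mul_right _ key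
      _ = t.card * Nat.choose N r * (r + 1) := by ring
  have := Nat.le_of_mul_le_mul_right hfin (Nat.succ_pos r)
  simpa [pCount, qCount, hs, ht] using this

/-- **Inequality (3.11):** `p_r ≤ q_{r+1}`, i.e. for `0 ≤ r ≤ N - 1`,
`|𝒫_r| · C(N, r+1) ≤ |𝒬_{r+1}| · C(N, r)`, where `N = |B \ A|`. -/
theorem pCount_le_qCount_succ
    (n : ℕ) (hn : 1 ≤ n)
    (A B : Finset (Fin n → ℝ)) (hAB : A ⊆ B) (hA : indepFinset A)
    (r : ℕ) (hr : r + 1 ≤ (B \ A).card) :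
    pCount r A B * Nat.choose (B \ A).card (r + 1)
      ≤ qCount (r + 1) A B * Nat.choose (B \ A).card r := by
  exact pCount_le_qCount_succ' n hn A B hAB hA r hr
end
end
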